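/- Adams' imaging satisfies ICK1': for every x with P'(x) > 0 and every event α determined by Z, the revised conditional given X=x, Y=y equals the imaged conditional: (P ∘_{aI} P')(Z=z | X=x, Y=y) = P(Z=z | Y=y), provided P(Y=y) > 0. -/
import Mathlib


open Finset

/-- The image of a joint PMF `P` on `Ω_X × Ω_Y × Ω_Z` on the value `x`, at an event `α`,
via the closest-world function `γ((x'', y', z), x) = (x, y', z)`. -/
noncomputable def imgOn {ΩX ΩY ΩZ : Type*} [Fintype ΩX] [Fintype ΩY] [Fintype ΩZ]
    [DecidableEq ΩX] [DecidableEq ΩY] [DecidableEq ΩZ]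
    (P : ΩX × ΩY × ΩZ → ℝ) (x : ΩX) (α : Finset (ΩX × ΩY × ΩZ)) : ℝ :=
  ∑ ω' ∈ α, ∑ ω : ΩX × ΩY × ΩZ, P ω * (if (x, ω.2.1, ω.2.2) = ω' then 1 else 0)

/-- Adams' imaging: `(P ∘_{aI} P')(α) = P(α ∩ {Y ≠ y}) + Σ_x P°_x(α ∩ {Y = y}) · P'(x)`. -/
noncomputable def aimaging {ΩX ΩY ΩZ : Type*} [Fintype ΩX] [Fintype ΩY] [Fintype ΩZ]
    [DecidableEq ΩX] [DecidableEq ΩY] [DecidableEq ΩZ]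
    (P : ΩX × ΩY × ΩZ → ℝ) (y : ΩY) (P' : ΩX → ℝ) (α : Finset (ΩX × ΩY × ΩZ)) : ℝ :=
  (∑ ω ∈ α.filter (fun ω => ω.2.1 ≠ y), P ω) +
  ∑ x : ΩX, imgOn P x (α.filter (fun ω => ω.2.1 = y)) * P' x

lemma imgOn_eval {ΩX ΩY ΩZ : Type*} [Fintype ΩX] [Fintype ΩY] [Fintype ΩZ]
    [DecidableEq ΩX] [DecidableEq ΩY] [DecidableEq ΩZ]
    (P : ΩX × ΩY × ΩZ → ℝ) (x : ΩX) (α : Finset (ΩX × ΩY × ΩZ)) :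
    imgOn P x α = ∑ ω : ΩX × ΩY × ΩZ,
      P ω * (if (x, ω.2.1, ω.2.2) ∈ α then 1 else 0) := by
  unfold imgOn
  rw [Finset.sum_comm]
  refine Finset.sum_congr rfl fun ω _ => ?_
  rw [← Finset.mul_sum, Finset.sum_ite_eq α (x, ω.2.1, ω.2.2) (fun _ => (1:ℝ))]

lemma aimaging_eval {ΩX ΩY ΩZ : Type*} [Fintype ΩX] [Fintype ΩY] [Fintype ΩZ]
    [DecidableEq ΩX] [DecidableEq ΩY] [DecidableEq ΩZ]
    (P : ΩX × ΩY × ΩZ → ℝ) (y : ΩY) (P' : ΩX → ℝ) (x : ΩX) (q : ΩZ → Prop)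
    [DecidablePred q] :
    aimaging P y P' (Finset.univ.filter (fun ω => ω.1 = x ∧ ω.2.1 = y ∧ q ω.2.2)) =
      (∑ ω ∈ Finset.univ.filter (fun ω : ΩX × ΩY × ΩZ => ω.2.1 = y ∧ q ω.2.2), P ω)
        * P' x := by
  unfold aimaging
  have h1 : (Finset.univ.filter
      (fun ω : ΩX × ΩY × ΩZ => ω.1 = x ∧ ω.2.1 = y ∧ q ω.2.2)).filter
      (fun ω => ω.2.1 ≠ y) = ∅ := by
    ext ω; simp +contextual [Finset.mem_filter]
  have h2 : (Finset.univ.filter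
      (fun ω : ΩX × ΩY × ΩZ => ω.1 = x ∧ ω.2.1 = y ∧ q ω.2.2)).filter
      (fun ω => ω.2.1 = y) =
      Finset.univ.filter (fun ω : ΩX × ΩY × ΩZ => ω.1 = x ∧ ω.2.1 = y ∧ q ω.2.2) := by
    ext ω; simp [Finset.mem_filter]; tauto
  rw [h1, h2, Finset.sum_empty, zero_add]
  have h3 : ∀ x' : ΩX, imgOn P x'
      (Finset.univ.filter (fun ω : ΩX × ΩY × ΩZ => ω.1 = x ∧ ω.2.1 = y ∧ q ω.2.2)) =
      if x' = x then
        (∑ ω ∈ Finset.univ.filter (fun ω : ΩX × ΩY × ΩZ => ω.2.1 = y ∧ q ω.2.2), P ω)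
      else 0 := by
    intro x'
    rw [imgOn_eval]
    by_cases hx : x' = x
    · subst hx
      simp only [if_pos rfl, Finset.mem_filter, Finset.mem_univ, true_and]
      rw [Finset.sum_filter]
      refine Finset.sum_congr rfl fun ω _ => ?_
      by_cases h : ω.2.1 = y ∧ q ω.2.2 <;> simp [h]
    · simp [Finset.mem_filter, hx]
  simp [h3, ite_mul]

/-- Adams' imaging satisfies ICK1': for every `x` with `P'(x) > 0` and every `z`, the
revised conditional given `X=x, Y=y` equals the imaged conditional:
`(P ∘_{aI} P')(Z=z | X=x, Y=y) = P(Z=z | Y=y)`, provided `P(Y=y) > 0`. -/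
theorem aimaging_ICK1 {ΩX ΩY ΩZ : Type*} [Fintype ΩX] [Fintype ΩY] [Fintype ΩZ]
    [DecidableEq ΩX] [DecidableEq ΩY] [DecidableEq ΩZ]
    (P : ΩX × ΩY × ΩZ → ℝ) (hP0 : ∀ ω, 0 ≤ P ω) (hP1 : ∑ ω, P ω = 1)
    (y : ΩY) (hy : 0 < ∑ ω ∈ Finset.univ.filter (fun ω => ω.2.1 = y), P ω)
    (P' : ΩX → ℝ) (hP'0 : ∀ x, 0 ≤ P' x) (hP'1 : ∑ x, P' x = 1) :
    ∀ x : ΩX, 0 < P' x → ∀ z : ΩZ,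
      aimaging P y P' (Finset.univ.filter (fun ω => ω.1 = x ∧ ω.2.1 = y ∧ ω.2.2 = z)) /
          aimaging P y P' (Finset.univ.filter (fun ω => ω.1 = x ∧ ω.2.1 = y)) =
        (∑ ω ∈ Finset.univ.filter (fun ω => ω.2.1 = y ∧ ω.2.2 = z), P ω) /
          (∑ ω ∈ Finset.univ.filter (fun ω => ω.2.1 = y), P ω) := by
  intro x hx z
  have e1 := aimaging_eval P y P' x (fun z' => z' = z)
  have e2 := aimaging_eval P y P' x (fun _ : ΩZ => True)
  have hfy : (Finset.univ.filter (fun ω : ΩX × ΩY × ΩZ => ω.1 = x ∧ ω.2.1 = y)) =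
      Finset.univ.filter (fun ω => ω.1 = x ∧ ω.2.1 = y ∧ (fun _ : ΩZ => True) ω.2.2) := by
    ext ω; simp
  have hfy2 : (Finset.univ.filter (fun ω : ΩX × ΩY × ΩZ => ω.2.1 = y)) =
      Finset.univ.filter (fun ω => ω.2.1 = y ∧ (fun _ : ΩZ => True) ω.2.2) := by
    ext ω; simp
  rw [hfy, e1, e2, ← hfy2, mul_div_mul_right _ _ (ne_of_gt hx)]
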